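/- Let φ be a discrete field satisfying the BDdV update rule: for all n ∈ ℤ and j ∈ ZMod N, R(n,j) = 0, i.e. φ_{n+1}^j = −φ_{n−1}^j + (φ_n^j + φ_n^{j+σ_n}) / (1 + (δ²/8)·(2 + (φ_n^j)² + (φ_n^{j+σ_n})²)). Then the total discrete energy is exactly conserved: Q₊(n) = Q₊(m) for all n, m ∈ ℤ, where Q₊(n) = δ·Σ_{j ∈ ZMod N} T⁰⁰₊(n,j). -/

import Mathlib

/-- `σ_n = 1` if `n` is odd, `−1` if `n` is even. -/
def sgm (n : ℤ) : ℤ := if Odd n then 1 else -1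

/-- The two discrete energy densities `T⁰⁰_±` of the BDdV scheme
(`s = 1` gives `T⁰⁰₊`, `s = −1` gives `T⁰⁰₋`). -/
noncomputable def T00BDdV (N : ℕ) (δ : ℝ) (φ : ℤ → ZMod N → ℝ)
    (s : ℤ) (n : ℤ) (j : ZMod N) : ℝ :=
  ((φ (n + s) j - φ n j)^2 + (φ (n + s) j - φ n (j + (sgm n : ZMod N)))^2) / (2 * δ^2)
    - 1/4
    + (1/8) * (1 + (φ (n + s) j)^2)
        * (2 + (φ n j)^2 + (φ n (j + (sgm n : ZMod N)))^2)

/-- The residue `R(n,j)` of the BDdV scheme; the BDdV update rule is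
`R(n,j) = 0`. -/
noncomputable def Rres (N : ℕ) (δ : ℝ) (φ : ℤ → ZMod N → ℝ)
    (n : ℤ) (j : ZMod N) : ℝ :=
  (φ (n + 1) j + φ (n - 1) j)
      * (1 + (δ^2 / 8) * (2 + (φ n j)^2 + (φ n (j + (sgm n : ZMod N)))^2))
    - φ n j - φ n (j + (sgm n : ZMod N))

/-- The discrete total energy `Q₊(n) = δ Σ_j T⁰⁰₊(n,j)`. -/
noncomputable def Qplus (N : ℕ) [NeZero N] (δ : ℝ) (φ : ℤ → ZMod N → ℝ)
    (n : ℤ) : ℝ :=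
  δ * ∑ j : ZMod N, T00BDdV N δ φ 1 n j

/-!
Since `T⁰⁰₊(n,j) - T⁰⁰₋(n,j) = (φ_{n+1}^j - φ_{n-1}^j) R(n,j) / δ²`, the update rule makes the
forward and backward densities agree at every site. Both are sums of a symmetric link energy over
the two links joining `φ_{n±1}^j` to `φ_n^j` and `φ_n^{j+σ_n}`; as `σ_{n+1} = -σ_n`, the backward
links of layer `n + 1` are the forward links of layer `n` up to a shift in `j`, so
`Σ_j T⁰⁰₋(n+1,j) = Σ_j T⁰⁰₊(n,j)` and hence `Q₊(n+1) = Q₊(n)`.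
-/

noncomputable def linkEnergy (δ x y : ℝ) : ℝ :=
  (x - y) ^ 2 / (2 * δ ^ 2) + (1 + x ^ 2) * (1 + y ^ 2) / 8 - 1 / 8

lemma linkEnergy_comm (δ x y : ℝ) : linkEnergy δ x y = linkEnergy δ y x := by
  unfold linkEnergy
  ring

lemma T00BDdV_eq_linkEnergy_add (N : ℕ) (δ : ℝ) (φ : ℤ → ZMod N → ℝ) (s n : ℤ) (j : ZMod N) :
    T00BDdV N δ φ s n j =
      linkEnergy δ (φ (n + s) j) (φ n j) + linkEnergy δ (φ (n + s) j) (φ n (j + sgm n)) := by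
  unfold T00BDdV linkEnergy
  ring

lemma sgm_add_one (n : ℤ) : sgm (n + 1) = -sgm n := by
  rcases Int.even_or_odd n with hn | hn
  · simp [sgm, hn.add_one, Int.not_odd_iff_even.mpr hn]
  · simp [sgm, hn, Int.not_odd_iff_even.mpr hn.add_one]

lemma sum_T00BDdV_backward_add_one (N : ℕ) [NeZero N] (δ : ℝ) (φ : ℤ → ZMod N → ℝ) (n : ℤ) :
    ∑ j : ZMod N, T00BDdV N δ φ (-1) (n + 1) j = ∑ j : ZMod N, T00BDdV N δ φ 1 n j := by
  have hσ : ((sgm (n + 1) : ℤ) : ZMod N) = -(sgm n : ZMod N) := by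
    rw [sgm_add_one, Int.cast_neg]
  have hdiag : ∀ j, φ (n + 1 + -1) j = φ n j := fun j => by rw [add_neg_cancel_right]
  have hshift : ∑ j : ZMod N, linkEnergy δ (φ (n + 1) (j + -sgm n)) (φ n j) =
      ∑ j : ZMod N, linkEnergy δ (φ (n + 1) j) (φ n (j + sgm n)) :=
    Fintype.sum_equiv (Equiv.addRight (-(sgm n : ZMod N))) _ _ fun j => by simp
  simp only [T00BDdV_eq_linkEnergy_add, hσ, hdiag, Finset.sum_add_distrib,
    linkEnergy_comm δ (φ n _) (φ (n + 1) _), hshift]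

lemma T00BDdV_forward_sub_backward (N : ℕ) {δ : ℝ} (hδ : δ ≠ 0) (φ : ℤ → ZMod N → ℝ) (n : ℤ)
    (j : ZMod N) :
    T00BDdV N δ φ 1 n j - T00BDdV N δ φ (-1) n j =
      (φ (n + 1) j - φ (n - 1) j) * Rres N δ φ n j / δ ^ 2 := by
  unfold T00BDdV Rres
  rw [← sub_eq_add_neg]
  field_simp
  ring

lemma Qplus_add_one (N : ℕ) [NeZero N] {δ : ℝ} (hδ : δ ≠ 0) (φ : ℤ → ZMod N → ℝ)
    (hR : ∀ n j, Rres N δ φ n j = 0) (n : ℤ) :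
    Qplus N δ φ (n + 1) = Qplus N δ φ n := by
  have hforward : ∀ j, T00BDdV N δ φ 1 (n + 1) j = T00BDdV N δ φ (-1) (n + 1) j := fun j => by
    rw [← sub_eq_zero, T00BDdV_forward_sub_backward N hδ, hR, mul_zero, zero_div]
  unfold Qplus
  simp only [hforward, sum_T00BDdV_backward_add_one]

/-- If the discrete field satisfies the BDdV update rule `R(n,j) = 0`
everywhere, then the total discrete energy is exactly conserved. -/
theorem BDdV_total_energy_conserved
    (N : ℕ) [NeZero N] (δ : ℝ) (hδ : 0 < δ)
    (φ : ℤ → ZMod N → ℝ)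
    (hR : ∀ (n : ℤ) (j : ZMod N), Rres N δ φ n j = 0) :
    ∀ n m : ℤ, Qplus N δ φ n = Qplus N δ φ m := by
  have hperiodic : Function.Periodic (Qplus N δ φ) 1 := Qplus_add_one N hδ.ne' φ hR
  intro n m
  simpa using (hperiodic.int_mul_eq n).trans (hperiodic.int_mul_eq m).symm
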